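/- Let 2 < p < ∞ and let Ω_p : ℓ_p → ℂ^ℕ be the Kalton–Peck map defined by Ω_p(x)_k = x_k · log(|x_k|/‖x‖_p) for x ≠ 0 (with the convention that terms with x_k = 0 are 0) and Ω_p(0) = 0. Then Ω_p is nontrivial: there is no linear map Λ : ℓ_p → ℂ^ℕ and constant C ≥ 0 such that Ω_p(x) − Λ(x) ∈ ℓ_p and ‖Ω_p(x) − Λ(x)‖_p ≤ C‖x‖_p for all x ∈ ℓ_p. -/

import Mathlib

/-!
If `Ω_p` were within bounded distance `C` of a linear map `Λ`, then on the unit vectors `e_k`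
(where `Ω_p` vanishes) `Λ e_k` would be bounded by `C`, while on each sign vector
`x_s = ∑_{k < n} ±e_k` (where `Ω_p x_s = -(log n / p) x_s`) `Λ` would be `C ‖x_s‖`-close to
`-(log n / p) x_s`. Hence the vectors `w_k = -Λ e_k - (log n / p) e_k`, of norm at least
`log n / p - C`, have all signed sums `∑ ±w_k` of norm at most `C n^{1/p}`. Since `ℓ_p` has
cotype `p` with constant `1` for `p ≥ 2` (Clarkson's inequality, obtained from the parallelogram
law coordinatewise), averaging `‖∑ ±w_k‖^p` over all signs gives `log n / p - C ≤ C` for every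
`n`, which is absurd.
-/

open scoped ENNReal

/-- The Kalton–Peck map `Ω_p` on `ℓ_p`: `Ω_p(x)_k = x_k · log (|x_k| / ‖x‖_p)`
(terms with `x_k = 0` vanish, and `Ω_p 0 = 0`, using `Real.log 0 = 0`). -/
noncomputable def kaltonPeck (p : ℝ≥0∞) (x : lp (fun _ : ℕ => ℂ) p) : ℕ → ℂ :=
  fun k => x k * (Real.log (‖x k‖ / ‖x‖) : ℂ)

open Finset

section SignedSum

variable {ι M N F : Type*} [DecidableEq ι] [AddCommGroup M] [AddCommGroup N]

/-- The sign pattern `ε ∈ {±1}^t` is encoded by the set `s` where `ε = 1`, so that summing over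
`s ∈ t.powerset` runs over all sign patterns. -/
def Finset.signedSum (t s : Finset ι) (f : ι → M) : M :=
  ∑ k ∈ t, if k ∈ s then f k else -f k

@[simp]
theorem Finset.signedSum_empty (s : Finset ι) (f : ι → M) : (∅ : Finset ι).signedSum s f = 0 :=
  sum_empty

theorem Finset.signedSum_insert {i : ι} {t : Finset ι} (hi : i ∉ t) (s : Finset ι) (f : ι → M) :
    (insert i t).signedSum s f = (if i ∈ s then f i else -f i) + t.signedSum s f :=
  sum_insert hi

theorem map_signedSum [FunLike F M N] [AddMonoidHomClass F M N] (φ : F) (t s : Finset ι)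
    (f : ι → M) : φ (t.signedSum s f) = t.signedSum s fun k => φ (f k) := by
  simp only [signedSum, map_sum, apply_ite φ, map_neg]

end SignedSum

section Clarkson

variable {ι : Type*} (𝕜 : Type*) {E : Type*} [RCLike 𝕜] [NormedAddCommGroup E]
  [InnerProductSpace 𝕜 E]

include 𝕜 in
theorem two_mul_norm_rpow_add_norm_rpow_le {q : ℝ} (hq : 2 ≤ q) (a c : E) :
    2 * (‖a‖ ^ q + ‖c‖ ^ q) ≤ ‖a + c‖ ^ q + ‖a - c‖ ^ q := by
  set r := q / 2
  have hr : 1 ≤ r := by simp only [r]; linarith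
  have hsq (z : E) : ‖z‖ ^ q = (‖z‖ ^ 2) ^ r := by
    rw [← Real.rpow_natCast_mul (norm_nonneg z)]; congr 1; simp only [r]; push_cast; ring
  have hpar := parallelogram_law_with_norm 𝕜 a c
  simp only [hsq]
  calc 2 * ((‖a‖ ^ 2) ^ r + (‖c‖ ^ 2) ^ r)
      ≤ 2 * (‖a‖ ^ 2 + ‖c‖ ^ 2) ^ r := by
        gcongr; exact Real.add_rpow_le_rpow_add (by positivity) (by positivity) hr
    _ = 2 * ((1 / 2 : ℝ) • ‖a + c‖ ^ 2 + (1 / 2 : ℝ) • ‖a - c‖ ^ 2) ^ r := by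
        congr 2; simp only [smul_eq_mul]; linarith
    _ ≤ 2 * ((1 / 2 : ℝ) • (‖a + c‖ ^ 2) ^ r + (1 / 2 : ℝ) • (‖a - c‖ ^ 2) ^ r) := by
        gcongr
        exact (convexOn_rpow hr).2 (Set.mem_Ici.2 (by positivity)) (Set.mem_Ici.2 (by positivity))
          (by norm_num) (by norm_num) (by norm_num)
    _ = _ := by simp only [smul_eq_mul]; ring

include 𝕜 in
theorem two_pow_card_mul_sum_norm_rpow_le [DecidableEq ι] {q : ℝ} (hq : 2 ≤ q) (t : Finset ι)
    (c : ι → E) :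
    2 ^ #t * ∑ k ∈ t, ‖c k‖ ^ q ≤ ∑ s ∈ t.powerset, ‖t.signedSum s c‖ ^ q := by
  induction t using Finset.induction_on with
  | empty => simpa using Real.rpow_nonneg le_rfl q
  | insert i t hi ih =>
    have hout : ∀ s ∈ t.powerset, i ∉ s := fun s hs h => hi (mem_powerset.1 hs h)
    have hsum : ∀ s ∈ t.powerset, t.signedSum (insert i s) c = t.signedSum s c := fun s hs =>
      sum_congr rfl fun k hk => by simp [ne_of_mem_of_not_mem hk hi]
    rw [sum_powerset_insert hi, ← sum_add_distrib, card_insert_of_notMem hi, sum_insert hi,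
      pow_succ]
    calc 2 ^ #t * 2 * (‖c i‖ ^ q + ∑ k ∈ t, ‖c k‖ ^ q)
        = 2 * (2 ^ #t * ‖c i‖ ^ q) + 2 * (2 ^ #t * ∑ k ∈ t, ‖c k‖ ^ q) := by ring
      _ ≤ ∑ s ∈ t.powerset, 2 * (‖c i‖ ^ q + ‖t.signedSum s c‖ ^ q) := by
        rw [← mul_sum, sum_add_distrib, sum_const, card_powerset, nsmul_eq_mul]
        push_cast
        linarith
      _ ≤ _ := sum_le_sum fun s hs => by
        rw [signedSum_insert hi, signedSum_insert hi, if_neg (hout s hs),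
          if_pos (mem_insert_self i s), hsum s hs,
          add_comm (-c i), ← sub_eq_add_neg, add_comm (c i)]
        linarith [two_mul_norm_rpow_add_norm_rpow_le 𝕜 hq (t.signedSum s c) (c i)]

end Clarkson

namespace lp

variable {α ι : Type*} {E : α → Type*} [∀ i, NormedAddCommGroup (E i)] {p : ℝ≥0∞}

section Cotype

variable (𝕜 : Type*) [RCLike 𝕜] [∀ i, InnerProductSpace 𝕜 (E i)] [DecidableEq ι]

include 𝕜 in
theorem two_pow_card_mul_sum_norm_rpow_le (hp : 2 ≤ p.toReal) (t : Finset ι) (w : ι → lp E p) :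
    2 ^ #t * ∑ k ∈ t, ‖w k‖ ^ p.toReal ≤ ∑ s ∈ t.powerset, ‖t.signedSum s w‖ ^ p.toReal := by
  have hp0 : 0 < p.toReal := by linarith
  have hnorm (f : lp E p) : ‖f‖ ^ p.toReal = ∑' j, ‖f j‖ ^ p.toReal :=
    (hasSum_norm hp0 f).tsum_eq.symm
  have hsumm (f : lp E p) : Summable fun j => ‖f j‖ ^ p.toReal := (hasSum_norm hp0 f).summable
  simp only [hnorm]
  rw [← Summable.tsum_finsetSum fun k _ => hsumm (w k), ← tsum_mul_left,
    ← Summable.tsum_finsetSum fun s _ => hsumm _]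
  refine Summable.tsum_le_tsum (fun j => ?_) ((summable_sum fun k _ => hsumm (w k)).mul_left _)
    (summable_sum fun s _ => hsumm _)
  have hj (s : Finset ι) : (t.signedSum s w) j = t.signedSum s fun k => w k j :=
    map_signedSum ((Pi.evalAddMonoidHom E j).comp (coeFnAddMonoidHom E p)) t s w
  simpa only [hj] using _root_.two_pow_card_mul_sum_norm_rpow_le 𝕜 hp t fun k => w k j

include 𝕜 in
theorem le_of_forall_norm_rpow_signedSum_le (hp : 2 ≤ p.toReal) {t : Finset ι} (ht : t.Nonempty)
    {w : ι → lp E p} {b M : ℝ} (hM : 0 ≤ M) (hw : ∀ k ∈ t, b ≤ ‖w k‖)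
    (hs : ∀ s ∈ t.powerset, ‖t.signedSum s w‖ ^ p.toReal ≤ #t * M ^ p.toReal) : b ≤ M := by
  rcases le_or_gt b 0 with hb | hb
  · linarith
  have hp0 : 0 < p.toReal := by linarith
  have hlower : #t * b ^ p.toReal ≤ ∑ k ∈ t, ‖w k‖ ^ p.toReal := by
    simpa using sum_le_sum fun k hk => Real.rpow_le_rpow hb.le (hw k hk) hp0.le
  have hupper : ∑ s ∈ t.powerset, ‖t.signedSum s w‖ ^ p.toReal ≤ 2 ^ #t * (#t * M ^ p.toReal) :=
    (sum_le_sum hs).trans_eq (by simp [card_powerset])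
  have hcard : (0 : ℝ) < 2 ^ #t * #t := by have := card_pos.2 ht; positivity
  refine (Real.rpow_le_rpow_iff hb.le hM hp0).1 (le_of_mul_le_mul_left ?_ hcard)
  calc 2 ^ #t * #t * b ^ p.toReal ≤ 2 ^ #t * ∑ k ∈ t, ‖w k‖ ^ p.toReal := by
        rw [mul_assoc]; gcongr
    _ ≤ ∑ s ∈ t.powerset, ‖t.signedSum s w‖ ^ p.toReal :=
        two_pow_card_mul_sum_norm_rpow_le 𝕜 hp t w
    _ ≤ 2 ^ #t * #t * M ^ p.toReal := by rw [mul_assoc]; exact hupper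

end Cotype

section Single

variable [DecidableEq α]

theorem signedSum_single (t s : Finset α) (a : ∀ i, E i) :
    t.signedSum s (fun k => lp.single p k (a k)) =
      ∑ k ∈ t, lp.single p k (if k ∈ s then a k else -a k) := by
  simp only [Finset.signedSum, apply_ite (lp.single p _), lp.single_neg]

theorem signedSum_single_apply (t s : Finset α) (a : ∀ i, E i) (j : α) :
    (t.signedSum s fun k => lp.single p k (a k)) j =
      if j ∈ t then (if j ∈ s then a j else -a j) else 0 := by
  rw [signedSum_single, coeFn_sum, Finset.sum_apply]
  simp [lp.single_apply]

theorem norm_rpow_signedSum_single (hp : 0 < p.toReal) (t s : Finset α) (a : ∀ i, E i) :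
    ‖t.signedSum s fun k => lp.single p k (a k)‖ ^ p.toReal = ∑ k ∈ t, ‖a k‖ ^ p.toReal := by
  rw [signedSum_single, lp.norm_sum_single hp]
  simp [apply_ite]

end Single

end lp

section KaltonPeck

variable {p : ℝ≥0∞}

theorem kaltonPeck_eq_neg_log_norm_smul (x : lp (fun _ : ℕ => ℂ) p)
    (hx : ∀ k, x k = 0 ∨ ‖x k‖ = 1) : kaltonPeck p x = -(Real.log ‖x‖ : ℂ) • ⇑x := by
  ext k
  rcases hx k with h | h
  · simp [kaltonPeck, h]
  · simp [kaltonPeck, h, Real.log_inv, mul_comm]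

theorem kaltonPeck_single [Fact (1 ≤ p)] (k : ℕ) : kaltonPeck p (lp.single p k 1) = 0 := by
  have hp : 0 < p := zero_lt_one.trans_le Fact.out
  rw [kaltonPeck_eq_neg_log_norm_smul]
  · simp [lp.norm_single hp]
  · intro j
    by_cases h : j = k <;> simp [lp.single_apply, h]

theorem kaltonPeck_signedSum_single [Fact (1 ≤ p)] (hp : 0 < p.toReal) (t s : Finset ℕ) :
    kaltonPeck p (t.signedSum s fun k => lp.single p k 1) =
      -((Real.log #t / p.toReal : ℝ) : ℂ) • ⇑(t.signedSum s fun k => lp.single p k (1 : ℂ)) := by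
  have hnorm : ‖t.signedSum s fun k => lp.single p k (1 : ℂ)‖ ^ p.toReal = #t := by
    simp [lp.norm_rpow_signedSum_single hp]
  rw [kaltonPeck_eq_neg_log_norm_smul]
  · rcases (norm_nonneg (t.signedSum s fun k => lp.single p k (1 : ℂ))).eq_or_lt with h | h
    · rw [← h, Real.zero_rpow hp.ne'] at hnorm
      rw [← h, ← hnorm]
      simp
    · rw [← hnorm, Real.log_rpow h, mul_div_cancel_left₀ _ hp.ne']
  · intro j
    rw [lp.signedSum_single_apply]
    split_ifs <;> simp

theorem apply_signedSum_single_of_kaltonPeck_sub [Fact (1 ≤ p)] (hp : 0 < p.toReal)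
    {F : Type*} [FunLike F (lp (fun _ : ℕ => ℂ) p) (ℕ → ℂ)]
    [AddMonoidHomClass F (lp (fun _ : ℕ => ℂ) p) (ℕ → ℂ)] (Λ : F)
    {y : lp (fun _ : ℕ => ℂ) p → lp (fun _ : ℕ => ℂ) p}
    (hy : ∀ x k, y x k = kaltonPeck p x k - Λ x k) (t s : Finset ℕ) :
    y (t.signedSum s fun k => lp.single p k 1) =
      t.signedSum s fun k =>
        y (lp.single p k 1) - ((Real.log #t / p.toReal : ℝ) : ℂ) • lp.single p k 1 := by
  ext j
  rw [hy, kaltonPeck_signedSum_single hp, map_signedSum]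
  simp only [signedSum, lp.coeFn_sum, Finset.sum_apply, apply_ite (fun f : lp _ p => f j),
    lp.coeFn_neg, Pi.neg_apply, lp.coeFn_sub, lp.coeFn_smul, Pi.sub_apply, Pi.smul_apply, hy,
    kaltonPeck_single]
  rw [Finset.smul_sum, ← Finset.sum_sub_distrib]
  refine sum_congr rfl fun k _ => ?_
  split_ifs <;> simp only [Pi.zero_apply, Pi.neg_apply, smul_eq_mul] <;> ring

theorem log_le_of_kaltonPeck_sub_bounded [Fact (1 ≤ p)] (hp : 2 ≤ p.toReal)
    {F : Type*} [FunLike F (lp (fun _ : ℕ => ℂ) p) (ℕ → ℂ)]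
    [AddMonoidHomClass F (lp (fun _ : ℕ => ℂ) p) (ℕ → ℂ)] (Λ : F) {C : ℝ} (hC : 0 ≤ C)
    (hbound : ∀ x : lp (fun _ : ℕ => ℂ) p, ∃ y : lp (fun _ : ℕ => ℂ) p,
      (∀ k : ℕ, y k = kaltonPeck p x k - Λ x k) ∧ ‖y‖ ≤ C * ‖x‖) {n : ℕ} (hn : 0 < n) :
    Real.log n ≤ 2 * C * p.toReal := by
  have hp0 : 0 < p.toReal := by linarith
  set a : ℝ := Real.log n / p.toReal with ha
  set e : ℕ → lp (fun _ : ℕ => ℂ) p := fun k => lp.single p k 1 with he_def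
  choose y hy hyC using hbound
  have he (k : ℕ) : ‖e k‖ = 1 := by
    simpa using lp.norm_single (E := fun _ : ℕ => ℂ) (zero_lt_one.trans_le Fact.out) k 1
  have hw (k : ℕ) : a - C ≤ ‖y (e k) - (a : ℂ) • e k‖ := by
    have hae : ‖(a : ℂ) • e k‖ = a := by
      rw [norm_smul, he, mul_one, Complex.norm_real,
        Real.norm_of_nonneg (div_nonneg (Real.log_natCast_nonneg n) hp0.le)]
    have hye : ‖y (e k)‖ ≤ C := by simpa [he] using hyC (e k)
    calc a - C ≤ ‖(a : ℂ) • e k‖ - ‖y (e k)‖ := by rw [hae]; linarith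
      _ ≤ ‖(a : ℂ) • e k - y (e k)‖ := norm_sub_norm_le _ _
      _ = ‖y (e k) - (a : ℂ) • e k‖ := norm_sub_rev _ _
  have hyw (s : Finset ℕ) : y ((range n).signedSum s e) =
      (range n).signedSum s fun k => y (e k) - (a : ℂ) • e k := by
    have h := apply_signedSum_single_of_kaltonPeck_sub hp0 Λ hy (range n) s
    rwa [card_range, ← ha, ← he_def] at h
  have hsigned (s : Finset ℕ) : ‖y ((range n).signedSum s e)‖ ^ p.toReal ≤
      #(range n) * C ^ p.toReal :=
    calc ‖y ((range n).signedSum s e)‖ ^ p.toReal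
        ≤ (C * ‖(range n).signedSum s e‖) ^ p.toReal :=
          Real.rpow_le_rpow (norm_nonneg _) (hyC _) hp0.le
      _ = #(range n) * C ^ p.toReal := by
          rw [Real.mul_rpow hC (norm_nonneg _), lp.norm_rpow_signedSum_single hp0]
          simp [mul_comm]
  have haC : a - C ≤ C := lp.le_of_forall_norm_rpow_signedSum_le ℂ hp
    (nonempty_range_iff.2 hn.ne') hC (fun k _ => hw k) fun s _ => hyw s ▸ hsigned s
  calc Real.log n = a * p.toReal := (div_mul_cancel₀ _ hp0.ne').symm
    _ ≤ 2 * C * p.toReal := by gcongr; linarith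

end KaltonPeck

/-- **Example 4.1 of the paper, nontriviality for `2 < p < ∞`.**
For `2 < p < ∞`, the Kalton–Peck map `Ω_p` is nontrivial: there is no linear map
`Λ : ℓ_p → ℂ^ℕ` and constant `C ≥ 0` such that `Ω_p x - Λ x ∈ ℓ_p` with
`‖Ω_p x - Λ x‖_p ≤ C ‖x‖_p` for all `x ∈ ℓ_p`. -/
theorem kaltonPeck_nontrivial (p : ℝ≥0∞) [Fact (1 ≤ p)] (hp2 : 2 < p) (hptop : p ≠ ∞) :
    ¬ ∃ (Λ : lp (fun _ : ℕ => ℂ) p →ₗ[ℂ] (ℕ → ℂ)) (C : ℝ), 0 ≤ C ∧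
        ∀ x : lp (fun _ : ℕ => ℂ) p, ∃ y : lp (fun _ : ℕ => ℂ) p,
          (∀ k : ℕ, y k = kaltonPeck p x k - Λ x k) ∧ ‖y‖ ≤ C * ‖x‖ := by
  rintro ⟨Λ, C, hC, hbound⟩
  have hp : 2 ≤ p.toReal := by
    simpa using (ENNReal.toReal_le_toReal (by simp) hptop).2 hp2.le
  obtain ⟨n, hn⟩ := exists_nat_gt (Real.exp (2 * C * p.toReal))
  have hn0 : (0 : ℝ) < n := (Real.exp_pos _).trans hn
  have hlog := log_le_of_kaltonPeck_sub_bounded hp Λ hC hbound (Nat.cast_pos.1 hn0)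
  rw [Real.log_le_iff_le_exp hn0] at hlog
  linarith
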